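/- For each integer n ≥ 8 with n ≡ 2 or 4 (mod 6), there exists a K_3-divisible graph G of order n whose complement has exactly n + 2 edges and which has no K_3-decomposition. -/

import Mathlib

/-!
Let `H` be the graph on `{0, …, n-1}` consisting of the star joining `0` to every vertex `≥ 3`,
the edge `12` and the 4-cycle `3-4-5-6`, and let `G = Hᶜ`. Every vertex has odd degree in `H`
(`n - 3`, `1` or `3`), so for even `n` every degree of `G` is even, and `H` has `n + 2` edges,
so `G` has `(n - 4)(n + 1) / 2` edges, a multiple of `3` as soon as `3 ∤ n`. But in `G` the
vertex `0` is adjacent only to `1` and `2`, which are not adjacent, so the edge `01` of `G` lies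
in no triangle and `G` has no `K_3`-decomposition.
-/

open Finset SimpleGraph

/-- A graph is `K_k`-divisible if `k(k-1)/2` divides its number of edges and `k-1`
divides every vertex degree. -/
def KkDivisible {V : Type*} (k : ℕ) (G : SimpleGraph V) : Prop :=
  (k * (k - 1) / 2) ∣ G.edgeSet.ncard ∧ ∀ x : V, (k - 1) ∣ (G.neighborSet x).ncard

/-- A `K_k`-decomposition of `G`: a set of `k`-cliques of `G` (i.e. subgraphs
isomorphic to `K_k`) such that every edge of `G` lies in exactly one of them. -/
def HasKkDecomposition {V : Type*} (k : ℕ) (G : SimpleGraph V) : Prop :=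
  ∃ D : Set (Finset V),
    (∀ A ∈ D, A.card = k ∧ ∀ x ∈ A, ∀ y ∈ A, x ≠ y → G.Adj x y) ∧
    (∀ x y : V, G.Adj x y → ∃! A, A ∈ D ∧ x ∈ A ∧ y ∈ A)

section Decomposition

variable {V : Type*} {k : ℕ} {G : SimpleGraph V}

theorem HasKkDecomposition.exists_isNClique_of_adj (hG : HasKkDecomposition k G) {u v : V}
    (huv : G.Adj u v) : ∃ s : Finset V, G.IsNClique k s ∧ u ∈ s ∧ v ∈ s := by
  obtain ⟨D, hD, hcover⟩ := hG
  obtain ⟨s, ⟨hsD, hu, hv⟩, -⟩ := hcover u v huv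
  exact ⟨s, ⟨fun x hx y hy hxy => (hD s hsD).2 x hx y hy hxy, (hD s hsD).1⟩, hu, hv⟩

theorem HasKkDecomposition.exists_adj_adj_of_adj (hk : 3 ≤ k) (hG : HasKkDecomposition k G)
    {u v : V} (huv : G.Adj u v) : ∃ w, G.Adj u w ∧ G.Adj v w := by
  classical
  obtain ⟨s, hs, hu, hv⟩ := hG.exists_isNClique_of_adj huv
  have hcard : 1 < #(s.erase u) := by rw [card_erase_of_mem hu, hs.card_eq]; omega
  obtain ⟨w, hw, hwv⟩ := exists_mem_ne hcard v
  obtain ⟨hwu, hws⟩ := mem_erase.1 hw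
  exact ⟨w, hs.isClique hu hws hwu.symm, hs.isClique hv hws hwv.symm⟩

end Decomposition

theorem kkDivisible_three_iff {V : Type*} [Fintype V] {G : SimpleGraph V}
    [DecidableRel G.Adj] : KkDivisible 3 G ↔ 3 ∣ #G.edgeFinset ∧ ∀ v, Even (G.degree v) := by
  simp only [KkDivisible, Set.ncard_eq_toFinset_card', ← edgeFinset_card, Set.toFinset_card,
    card_neighborSet_eq_degree, even_iff_two_dvd]
  rfl

namespace SimpleGraph

variable {V : Type*} [Fintype V] [DecidableEq V] (G : SimpleGraph V) [DecidableRel G.Adj]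

theorem card_edgeFinset_add_card_edgeFinset_compl :
    #G.edgeFinset + #Gᶜ.edgeFinset = (Fintype.card V).choose 2 := by
  rw [← card_edgeFinset_top_eq_card_choose_two,
    ← card_union_of_disjoint (disjoint_edgeFinset.2 disjoint_compl_right), ← edgeFinset_sup]
  congr! 2
  exact sup_compl_eq_top

theorem card_edgeFinset_compl :
    #Gᶜ.edgeFinset = (Fintype.card V).choose 2 - #G.edgeFinset := by
  have := G.card_edgeFinset_add_card_edgeFinset_compl
  omega

variable {G} in
theorem even_degree_compl (hV : Even (Fintype.card V)) {v : V} (hv : Odd (G.degree v)) :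
    Even (Gᶜ.degree v) := by
  have := G.degree_lt_card_verts v
  rw [degree_compl]
  obtain ⟨a, ha⟩ := hV
  obtain ⟨b, hb⟩ := hv
  exact ⟨a - b - 1, by omega⟩

end SimpleGraph

theorem SimpleGraph.degree_comap_finVal {n : ℕ} (G : SimpleGraph ℕ) [DecidableRel G.Adj]
    (x : Fin n) : (G.comap Fin.val).degree x = #{b ∈ range n | G.Adj x b} := by
  rw [← card_neighborFinset_eq_degree, neighborFinset_eq_filter, card_filter, card_filter]
  exact Fin.sum_univ_eq_sum_range (fun b => if G.Adj x b then 1 else 0) n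

theorem Finset.filter_range_eq_filter_range_of_le {m n : ℕ} (hmn : m ≤ n) {p : ℕ → Prop}
    [DecidablePred p] (hp : ∀ b, p b → b < m) : {b ∈ range n | p b} = {b ∈ range m | p b} := by
  ext b
  simp only [mem_filter, mem_range]
  exact ⟨fun h => ⟨hp b h.2, h.2⟩, fun h => ⟨h.1.trans_le hmn, h.2⟩⟩

theorem three_dvd_choose_two_sub {n : ℕ} (hn : n % 3 ≠ 0) : 3 ∣ n.choose 2 - (n + 2) := by
  have h : 2 * n.choose 2 = n * (n - 1) := by
    rw [Nat.choose_two_right, Nat.mul_div_cancel' (Nat.even_mul_pred_self n).two_dvd]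
  generalize n.choose 2 = c at h ⊢
  obtain ⟨m, rfl | rfl⟩ : ∃ m, n = 3 * m + 1 ∨ n = 3 * m + 2 := ⟨n / 3, by omega⟩ <;>
  · simp only [Nat.add_sub_cancel, show 3 * m + 2 - 1 = 3 * m + 1 by omega] at h
    ring_nf at h
    omega

def starEdgeCycleRel (a b : ℕ) : Prop :=
  (a = 0 ∧ 3 ≤ b) ∨ (a = 1 ∧ b = 2) ∨ (a = 3 ∧ b = 4) ∨ (a = 4 ∧ b = 5) ∨ (a = 5 ∧ b = 6) ∨
    (a = 3 ∧ b = 6)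

instance : DecidableRel starEdgeCycleRel := fun _ _ =>
  inferInstanceAs (Decidable (_ ∨ _))

def starEdgeCycle (n : ℕ) : SimpleGraph (Fin n) :=
  (fromRel starEdgeCycleRel).comap Fin.val

instance (n : ℕ) : DecidableRel (starEdgeCycle n).Adj :=
  inferInstanceAs (DecidableRel ((fromRel starEdgeCycleRel).comap Fin.val).Adj)

def starEdgeCycleDegree (n a : ℕ) : ℕ :=
  if a = 0 then n - 3 else if a ≤ 2 ∨ 7 ≤ a then 1 else 3

section StarEdgeCycle

variable {n : ℕ}

theorem starEdgeCycle_degree (hn : 7 ≤ n) (x : Fin n) :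
    (starEdgeCycle n).degree x = starEdgeCycleDegree n x := by
  refine (degree_comap_finVal (fromRel starEdgeCycleRel) x).trans ?_
  obtain ⟨a, ha⟩ := x
  rcases (show a = 0 ∨ (1 ≤ a ∧ a ≤ 6) ∨ 7 ≤ a by omega) with ha0 | ⟨ha1, ha6⟩ | ha7
  · rw [show {b ∈ range n | (fromRel starEdgeCycleRel).Adj a b} = Ico 3 n by
      ext b
      simp only [mem_filter, mem_range, mem_Ico, fromRel_adj, starEdgeCycleRel]
      omega]
    simp [starEdgeCycleDegree, ha0]
  · rw [filter_range_eq_filter_range_of_le hn fun b hb => by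
      simp only [fromRel_adj, starEdgeCycleRel] at hb; omega]
    interval_cases a <;> rfl
  · rw [show {b ∈ range n | (fromRel starEdgeCycleRel).Adj a b} = {0} by
      ext b
      simp only [mem_filter, mem_range, mem_singleton, fromRel_adj, starEdgeCycleRel]
      omega]
    simp [starEdgeCycleDegree, show a ≠ 0 by omega, ha7]

theorem card_edgeFinset_starEdgeCycle (hn : 7 ≤ n) : #(starEdgeCycle n).edgeFinset = n + 2 := by
  have hsum := (starEdgeCycle n).sum_degrees_eq_twice_card_edges
  have hlow : ∑ a ∈ range 7, starEdgeCycleDegree n a = n - 3 + 14 := by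
    simp [sum_range_succ, starEdgeCycleDegree]
  have hhigh : ∑ a ∈ Ico 7 n, starEdgeCycleDegree n a = n - 7 := by
    rw [sum_congr rfl (g := fun _ => 1) fun a ha => by
      rw [mem_Ico] at ha; rw [starEdgeCycleDegree, if_neg (by omega), if_pos (by omega)]]
    simp
  simp only [starEdgeCycle_degree hn] at hsum
  rw [Fin.sum_univ_eq_sum_range (starEdgeCycleDegree n), ← sum_range_add_sum_Ico _ hn, hlow,
    hhigh] at hsum
  omega

theorem odd_degree_starEdgeCycle (hn : 7 ≤ n) (heven : Even n) (x : Fin n) :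
    Odd ((starEdgeCycle n).degree x) := by
  rw [Nat.even_iff] at heven
  rw [starEdgeCycle_degree hn, starEdgeCycleDegree, Nat.odd_iff]
  split_ifs <;> omega

theorem not_hasKkDecomposition_three_compl_starEdgeCycle (hn : 2 ≤ n) :
    ¬ HasKkDecomposition 3 (starEdgeCycle n)ᶜ := by
  intro hG
  obtain ⟨w, h0, h1⟩ := hG.exists_adj_adj_of_adj le_rfl (u := ⟨0, by omega⟩)
    (v := ⟨1, by omega⟩) (by simp [starEdgeCycle, starEdgeCycleRel])
  simp [starEdgeCycle, starEdgeCycleRel, Fin.ext_iff] at h0 h1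
  omega

end StarEdgeCycle

/-- For each `n ≥ 8` with `n ≡ 2` or `4 (mod 6)` there is a `K_3`-divisible graph of
order `n` whose complement has exactly `n + 2` edges and which has no
`K_3`-decomposition. -/
theorem nondecomposable_K3_two_four_mod_six (n : ℕ) (hn : 8 ≤ n)
    (hmod : n % 6 = 2 ∨ n % 6 = 4) :
    ∃ G : SimpleGraph (Fin n), KkDivisible 3 G ∧
      Gᶜ.edgeSet.ncard = n + 2 ∧ ¬ HasKkDecomposition 3 G := by
  have hn7 : 7 ≤ n := by omega
  have heven : Even n := by rw [Nat.even_iff]; omega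
  refine ⟨(starEdgeCycle n)ᶜ, kkDivisible_three_iff.2 ⟨?_, fun v => ?_⟩, ?_,
    not_hasKkDecomposition_three_compl_starEdgeCycle (by omega)⟩
  · rw [card_edgeFinset_compl, Fintype.card_fin, card_edgeFinset_starEdgeCycle hn7]
    exact three_dvd_choose_two_sub (by omega)
  · exact even_degree_compl (by rwa [Fintype.card_fin]) (odd_degree_starEdgeCycle hn7 heven v)
  · rw [compl_compl, ← coe_edgeFinset, Set.ncard_coe_finset]
    exact card_edgeFinset_starEdgeCycle hn7
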